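/- Let A = ℤ⟨X,Y⟩ and p = 2. If (x₀,x₁,x₂,...) lies in the topological closure of [X(A),X(A)], then x₁ ∈ H := A₄⁰ + F⁵A + 2A. -/

import Mathlib

/-!
Only the component `x₁` matters, and `x ↦ x₁` is continuous into the discrete ring `A`. For a
generator of `X(A)` that component is either `a₁² ⋯ a_r²` or lies in `2A`; both have even
coefficients at the one-letter words, and such elements form a subring `S`. For `a, b ∈ S`, the
coefficient of `ab - ba` at a word `w` is `∑ (a(u) b(v) - b(u) a(v))` over the splittings
`w = uv`. Modulo 2 the splittings with a one-letter factor drop out and the splittings `(1, w)`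
and `(w, 1)` cancel, so for `|w| ≤ 3` nothing is left, and for `w = uu` with `|u| = 2` only
`a(u) b(u) - b(u) a(u) = 0` remains. So `ab - ba` is even at every word of length `≤ 3` and at
`XYXY`, `YXYX`, i.e. it lies in `H`.
-/

/-- Verschiebung operator: `V(a₀,a₁,...) = p·(0,a₀,a₁,...)`. -/
def Vb (p : ℕ) {A : Type*} [Ring A] (a : ℕ → A) : ℕ → A
  | 0 => 0
  | n + 1 => (p : A) * a n

/-- Teichmüller element: `⟨a⟩ = (a, a^p, a^{p²}, ...)`. -/
def tm (p : ℕ) {A : Type*} [Ring A] (a : A) : ℕ → A := fun n => a ^ p ^ n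

/-- Generators of `X(A)`: all `V^m(⟨a₁⟩⋯⟨a_r⟩)` with `m ∈ ℕ₀`, `r ≥ 1`, `aᵢ ∈ A`. -/
def XAgen (p : ℕ) (A : Type*) [Ring A] : Set (ℕ → A) :=
  {x | ∃ (m : ℕ) (l : List A), l ≠ [] ∧ x = (Vb p)^[m] ((l.map (tm p)).prod)}

/-- `X(A)`: the topological closure of the additive subgroup generated by `XAgen`. -/
noncomputable def XA (p : ℕ) (A : Type*) [Ring A] [TopologicalSpace A] [DiscreteTopology A] :
    AddSubgroup (ℕ → A) :=
  (AddSubgroup.closure (XAgen p A)).topologicalClosure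

/-- The set of commutators `xy − yx` with `x, y ∈ X(A)`. -/
def commXA (p : ℕ) (A : Type*) [Ring A] [TopologicalSpace A] [DiscreteTopology A] :
    Set (ℕ → A) :=
  {z | ∃ x ∈ XA p A, ∃ y ∈ XA p A, z = x * y - y * x}

/-- Words in the two letters `X, Y`. -/
abbrev FW := FreeMonoid (Fin 2)

/-- `A = ℤ⟨X,Y⟩`. -/
abbrev A2 := MonoidAlgebra ℤ FW

instance : TopologicalSpace A2 := ⊥
instance : DiscreteTopology A2 := ⟨rfl⟩

/-- The word `XYXY`. -/
def wXYXY : FW := FreeMonoid.of 0 * FreeMonoid.of 1 * FreeMonoid.of 0 * FreeMonoid.of 1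

/-- The word `YXYX`. -/
def wYXYX : FW := FreeMonoid.of 1 * FreeMonoid.of 0 * FreeMonoid.of 1 * FreeMonoid.of 0

/-- Generators of `A₄⁰`: all words of length `4` except `XYXY` and `YXYX`. -/
def A40set : Set A2 :=
  {x | ∃ w : FW, w.length = 4 ∧ w ≠ wXYXY ∧ w ≠ wYXYX ∧ x = MonoidAlgebra.of ℤ FW w}

/-- The words of length `≥ n`; they generate `FⁿA = ⊕_{i≥n} A_i` as an additive group. -/
def FdegSet (n : ℕ) : Set A2 :=
  {x | ∃ w : FW, n ≤ w.length ∧ x = MonoidAlgebra.of ℤ FW w}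

/-- The set `2A`. -/
def twoA : Set A2 := {x | ∃ a : A2, x = 2 * a}

/-- `H := A₄⁰ + F⁵A + 2A`, as the additive subgroup generated by the union. -/
noncomputable def Hsub : AddSubgroup A2 := AddSubgroup.closure (A40set ∪ FdegSet 5 ∪ twoA)

open Finset

theorem MonoidAlgebra.coeff_mul_ofList {R α : Type*} [Semiring R]
    (f g : MonoidAlgebra R (FreeMonoid α)) (l : List α) :
    (f * g).coeff (FreeMonoid.ofList l) =
      ∑ i ∈ range (l.length + 1),
        f.coeff (FreeMonoid.ofList (l.take i)) * g.coeff (FreeMonoid.ofList (l.drop i)) := by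
  classical
  rw [coeff_mul_antidiag f g _ ((range (l.length + 1)).image
    fun i => (FreeMonoid.ofList (l.take i), FreeMonoid.ofList (l.drop i)))]
  · refine sum_image fun i hi j hj hij => ?_
    have := congrArg (fun p => (FreeMonoid.toList p.1).length) hij
    simp only [coe_range, Set.mem_Iio, FreeMonoid.toList_ofList, List.length_take] at hi hj this
    omega
  · rintro ⟨u, v⟩
    simp only [mem_image, mem_range, Prod.mk.injEq]
    constructor
    · rintro ⟨i, -, rfl, rfl⟩
      rw [← FreeMonoid.ofList_append, List.take_append_drop]
    · intro h
      obtain rfl : u.toList ++ v.toList = l := by rw [← FreeMonoid.toList_mul, h]; rfl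
      exact ⟨u.toList.length, by simp, by simp, by simp⟩

namespace FreeMonoid

variable {α : Type*}

theorem coeff_mul_of {R : Type*} [Semiring R] (f g : MonoidAlgebra R (FreeMonoid α)) (a : α) :
    (f * g).coeff (of a) = f.coeff 1 * g.coeff (of a) + f.coeff (of a) * g.coeff 1 := by
  rw [← ofList_singleton, MonoidAlgebra.coeff_mul_ofList]
  simp [sum_range_succ]

def evenLetterCoeffs : Subring (MonoidAlgebra ℤ (FreeMonoid α)) where
  carrier := {z | ∀ a : α, 2 ∣ z.coeff (of a)}
  zero_mem' _ := by simp
  one_mem' a := by simp [MonoidAlgebra.one_def]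
  add_mem' hf hg a := by simpa using dvd_add (hf a) (hg a)
  neg_mem' hf a := by simpa using hf a
  mul_mem' hf hg a := by
    rw [coeff_mul_of]
    exact dvd_add ((hg a).mul_left _) ((hf a).mul_right _)

theorem sq_mem_evenLetterCoeffs (f : MonoidAlgebra ℤ (FreeMonoid α)) :
    f ^ 2 ∈ evenLetterCoeffs :=
  fun a => ⟨f.coeff 1 * f.coeff (of a), by rw [sq, coeff_mul_of]; ring⟩

theorem two_mul_mem_evenLetterCoeffs (f : MonoidAlgebra ℤ (FreeMonoid α)) :
    2 * f ∈ evenLetterCoeffs :=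
  fun a => ⟨f.coeff (of a), by simp [two_mul]⟩

theorem two_dvd_coeff_commutator {f g : MonoidAlgebra ℤ (FreeMonoid α)}
    (hf : f ∈ evenLetterCoeffs) (hg : g ∈ evenLetterCoeffs) {w : FreeMonoid α}
    (hw : w.length ≤ 3 ∨ ∃ a b : α, w = of a * of b * of a * of b) :
    2 ∣ (f * g - g * f).coeff w := by
  have hf2 (a : α) : (f.coeff (of a) : ZMod 2) = 0 :=
    (ZMod.intCast_zmod_eq_zero_iff_dvd _ 2).2 (hf a)
  have hg2 (a : α) : (g.coeff (of a) : ZMod 2) = 0 :=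
    (ZMod.intCast_zmod_eq_zero_iff_dvd _ 2).2 (hg a)
  obtain ⟨l, rfl⟩ := ofList.surjective w
  rw [← Nat.cast_ofNat, ← ZMod.intCast_zmod_eq_zero_iff_dvd, MonoidAlgebra.coeff_sub,
    Finsupp.sub_apply, MonoidAlgebra.coeff_mul_ofList, MonoidAlgebra.coeff_mul_ofList]
  rcases hw with hl | ⟨a, b, hl⟩
  · match l, hl with
    | [], _ | [_], _ | [_, _], _ | [_, _, _], _ =>
      simp [sum_range_succ, hf2, hg2] <;> ring
  · obtain rfl : l = [a, b, a, b] := ofList.injective hl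
    simp [sum_range_succ, hf2, hg2]
    ring

end FreeMonoid

open MonoidAlgebra in
theorem mem_Hsub_of_two_dvd_coeff {z : A2}
    (h : ∀ w : FW, w.length ≤ 3 ∨ w = wXYXY ∨ w = wYXYX → 2 ∣ z.coeff w) : z ∈ Hsub := by
  rw [← z.sum_coeff_single]
  refine AddSubgroup.sum_mem _ fun w _ => ?_
  by_cases hw : w.length ≤ 3 ∨ w = wXYXY ∨ w = wYXYX
  · obtain ⟨c, hc⟩ := h w hw
    refine AddSubgroup.subset_closure (Or.inr ⟨single w c, ?_⟩)
    rw [hc, two_mul, two_mul, single_add]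
  · push Not at hw
    obtain ⟨hw3, hw₁, hw₂⟩ := hw
    rw [← mul_one (z.coeff w), ← smul_single', ← of_apply]
    refine zsmul_mem (AddSubgroup.subset_closure ?_) _
    rcases le_or_gt 5 w.length with hw5 | hw5
    · exact .inl (.inr ⟨w, hw5, rfl⟩)
    · exact .inl (.inl ⟨w, by omega, hw₁, hw₂, rfl⟩)

theorem isClosed_comap_evalAddMonoidHom {A : Type*} [AddGroup A] [TopologicalSpace A]
    [DiscreteTopology A] (T : AddSubgroup A) (n : ℕ) :
    IsClosed (T.comap (Pi.evalAddMonoidHom (fun _ : ℕ => A) n) : Set (ℕ → A)) :=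
  (isClosed_discrete (T : Set A)).preimage (continuous_apply n)

section WittComponents

variable {A : Type*} [Ring A] [TopologicalSpace A] [DiscreteTopology A]

theorem apply_one_mem_of_mem_XA (S : Subring A) (hsq : ∀ a, a ^ 2 ∈ S) (htwo : ∀ a, 2 * a ∈ S)
    {u : ℕ → A} (hu : u ∈ XA 2 A) : u 1 ∈ S := by
  refine AddSubgroup.topologicalClosure_minimal _ ?_
    (isClosed_comap_evalAddMonoidHom S.toAddSubgroup 1) hu
  rw [AddSubgroup.closure_le]
  rintro _ ⟨m | m, l, -, rfl⟩
  · show (l.map (tm 2)).prod 1 ∈ S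
    rw [Pi.list_prod_apply, List.map_map]
    exact S.list_prod_mem (by simpa [tm] using fun a _ => hsq a)
  · show (Vb 2)^[m + 1] _ 1 ∈ S
    rw [Function.iterate_succ_apply']
    simpa [Vb] using htwo _

theorem apply_one_mem_of_mem_closure_commXA (S : Subring A) (hsq : ∀ a, a ^ 2 ∈ S)
    (htwo : ∀ a, 2 * a ∈ S) (T : AddSubgroup A) (hT : ∀ a ∈ S, ∀ b ∈ S, a * b - b * a ∈ T)
    {x : ℕ → A} (hx : x ∈ closure (AddSubgroup.closure (commXA 2 A) : Set (ℕ → A))) :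
    x 1 ∈ T := by
  refine closure_minimal ?_ (isClosed_comap_evalAddMonoidHom T 1) hx
  rw [SetLike.coe_subset_coe, AddSubgroup.closure_le]
  rintro _ ⟨u, hu, v, hv, rfl⟩
  exact hT _ (apply_one_mem_of_mem_XA S hsq htwo hu) _ (apply_one_mem_of_mem_XA S hsq htwo hv)

end WittComponents

/-- for `A = ℤ⟨X,Y⟩` and `p = 2`, if `(x₀,x₁,x₂,...)` lies in the topological
closure of `[X(A),X(A)]`, then `x₁ ∈ H = A₄⁰ + F⁵A + 2A`. -/
theorem stmt10 (x : ℕ → A2)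
    (hx : x ∈ closure ((AddSubgroup.closure (commXA 2 A2) : AddSubgroup (ℕ → A2)) :
      Set (ℕ → A2))) :
    x 1 ∈ Hsub := by
  refine apply_one_mem_of_mem_closure_commXA (A := A2) FreeMonoid.evenLetterCoeffs
    FreeMonoid.sq_mem_evenLetterCoeffs FreeMonoid.two_mul_mem_evenLetterCoeffs Hsub
    (fun a ha b hb => mem_Hsub_of_two_dvd_coeff fun w hw => ?_) hx
  have hw' : w.length ≤ 3 ∨ ∃ c d : Fin 2, w = .of c * .of d * .of c * .of d := by
    rcases hw with hw | rfl | rfl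
    exacts [.inl hw, .inr ⟨0, 1, rfl⟩, .inr ⟨1, 0, rfl⟩]
  exact FreeMonoid.two_dvd_coeff_commutator ha hb hw'
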